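/- arXiv:1306.1327 — 7 statements merged into one kernel-verified Lean document; each statement's English description precedes it below -/
import Mathlib

section
/- If f, g : I → ℝ are Hahn symmetric differentiable at t ∈ I^{q,ω} with t ≠ ω₀, then the product fg is Hahn symmetric differentiable at t and D̃_{q,ω}[fg](t) = D̃_{q,ω}[f](t)·g(σ(t)) + f(σ⁻¹(t))·D̃_{q,ω}[g](t), where σ(t) = qt + ω and σ⁻¹(t) = q⁻¹(t − ω). -/
/-- Hahn symmetric difference operator for `t ≠ ω₀`:
`D̃_{q,ω}[f](t) = (f(qt+ω) − f(q⁻¹(t−ω)))/((q−q⁻¹)t + (1+q⁻¹)ω)`. -/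
noncomputable def hahnSymD (q ω : ℝ) (f : ℝ → ℝ) (t : ℝ) : ℝ :=
  (f (q * t + ω) - f (q⁻¹ * (t - ω))) / ((q - q⁻¹) * t + (1 + q⁻¹) * ω)

theorem mul_sub_mul_div_eq {K : Type*} [Field K] (a b c d h : K) :
    (a * c - b * d) / h = (a - b) / h * c + b * ((c - d) / h) := by
  ring

theorem stmt3_general (q ω : ℝ)
    (f g : ℝ → ℝ) (t : ℝ) :
    hahnSymD q ω (fun s => f s * g s) t
      = hahnSymD q ω f t * g (q * t + ω)
        + f (q⁻¹ * (t - ω)) * hahnSymD q ω g t :=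
  mul_sub_mul_div_eq _ _ _ _ _

/-- Product rule for the Hahn symmetric derivative at `t ∈ I^{q,ω}`, `t ≠ ω₀`:
`D̃_{q,ω}[fg](t) = D̃_{q,ω}[f](t)·g(σ(t)) + f(σ⁻¹(t))·D̃_{q,ω}[g](t)`. -/
theorem stmt3 (q ω : ℝ) (hq : q ∈ Set.Ioo (0:ℝ) 1) (hω : 0 ≤ ω)
    (I : Set ℝ) (hω0 : ω / (1 - q) ∈ I)
    (f g : ℝ → ℝ) (t : ℝ) (htI : t ∈ (fun s => q * s + ω) '' I)
    (ht : t ≠ ω / (1 - q)) :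
    hahnSymD q ω (fun s => f s * g s) t
      = hahnSymD q ω f t * g (q * t + ω)
        + f (q⁻¹ * (t - ω)) * hahnSymD q ω g t :=
  stmt3_general q ω f g t
end

section
/- Let q ∈ (0,1), ω ≥ 0, ω₀ = ω/(1-q), and f : I → ℝ with D̃_{q,ω}[f](t) = 0 for all t ∈ I^{q,ω}. If f is continuous at ω₀, then f is constant on I. -/
/-!
Write `σ s = q s + ω`, whose fixed point is `ω₀`. At `t = σ s` the Hahn symmetric derivative is
the difference quotient of `f` between `s` and `σ (σ s) = ω₀ + q² (s - ω₀)`, so its vanishing makes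
`f` invariant under the homothety of ratio `q²` centred at `ω₀`. Iterating, `f t` equals `f` at
points of `I` converging to `ω₀`, and continuity at `ω₀` gives `f t = f ω₀`.
-/

open Filter Topology

noncomputable def hahnSymmDeriv (q ω : ℝ) (f : ℝ → ℝ) (t : ℝ) : ℝ :=
  if t = ω / (1 - q) then deriv f t
  else (f (q * t + ω) - f (q⁻¹ * (t - ω))) / ((q - q⁻¹) * t + (1 + q⁻¹) * ω)

theorem StarConvex.apply_eq_of_forall_apply_homothety_eq {E F : Type*} [AddCommGroup E]
    [Module ℝ E] [TopologicalSpace E] [IsTopologicalAddGroup E] [ContinuousSMul ℝ E]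
    [TopologicalSpace F] [T2Space F] {I : Set E} {c : E} {r : ℝ} {f : E → F}
    (hI : StarConvex ℝ c I) (hr₀ : 0 ≤ r) (hr₁ : r < 1)
    (hf : ∀ s ∈ I, f (c + r • (s - c)) = f s) (hcont : ContinuousWithinAt f I c)
    {t : E} (ht : t ∈ I) : f t = f c := by
  set u : ℕ → E := fun n => c + r ^ n • (t - c)
  have hu_mem (n : ℕ) : u n ∈ I :=
    hI.add_smul_sub_mem ht (pow_nonneg hr₀ n) (pow_le_one₀ hr₀ hr₁.le)
  have hfu (n : ℕ) : f (u n) = f t := by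
    induction n with
    | zero => simp [u]
    | succ n ih =>
      rw [← ih, ← hf _ (hu_mem n)]
      simp [u, pow_succ', mul_smul]
  have hu_lim : Tendsto u atTop (𝓝[I] c) := by
    refine tendsto_nhdsWithin_of_tendsto_nhds_of_eventually_within _ ?_ (.of_forall hu_mem)
    simpa using ((tendsto_pow_atTop_nhds_zero_of_lt_one hr₀ hr₁).smul_const (t - c)).const_add c
  refine tendsto_nhds_unique ?_ (hcont.tendsto.comp hu_lim)
  simp only [Function.comp_def, hfu, tendsto_const_nhds]

section Hahn

variable {q ω : ℝ} {f : ℝ → ℝ}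

theorem hahnSymmDeriv_mul_add (hq₀ : q ≠ 0) (hq₁ : q ≠ 1) {s : ℝ} (hs : s ≠ ω / (1 - q)) :
    hahnSymmDeriv q ω f (q * s + ω) =
      (f (ω / (1 - q) + q ^ 2 * (s - ω / (1 - q))) - f s) / ((q ^ 2 - 1) * (s - ω / (1 - q))) := by
  have h1q : 1 - q ≠ 0 := sub_ne_zero.mpr hq₁.symm
  have hne : q * s + ω ≠ ω / (1 - q) := by
    have hσ : q * s + ω - ω / (1 - q) = q * (s - ω / (1 - q)) := by field_simp; ring
    rw [← sub_ne_zero, hσ]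
    exact mul_ne_zero hq₀ (sub_ne_zero.mpr hs)
  rw [hahnSymmDeriv, if_neg hne]
  congr 2
  · congr 1; field_simp; ring
  · congr 1; field_simp; ring
  · field_simp; ring

theorem apply_sq_homothety_eq_of_hahnSymmDeriv_eq_zero (hq₀ : 0 < q) (hq₁ : q < 1) {s : ℝ}
    (h : hahnSymmDeriv q ω f (q * s + ω) = 0) :
    f (ω / (1 - q) + q ^ 2 * (s - ω / (1 - q))) = f s := by
  rcases eq_or_ne s (ω / (1 - q)) with rfl | hs
  · simp
  rw [hahnSymmDeriv_mul_add hq₀.ne' hq₁.ne hs, div_eq_zero_iff, sub_eq_zero] at h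
  refine h.resolve_right (mul_ne_zero ?_ (sub_ne_zero.mpr hs))
  nlinarith

end Hahn

theorem stmt4_general (q ω : ℝ) (hq : q ∈ Set.Ioo (0:ℝ) 1)
    (I : Set ℝ) (hI : I.OrdConnected) (hω0 : ω / (1 - q) ∈ I)
    (f : ℝ → ℝ)
    (hD : ∀ t ∈ (fun s => q * s + ω) '' I,
      (if t = ω / (1 - q) then deriv f t
       else (f (q * t + ω) - f (q⁻¹ * (t - ω))) / ((q - q⁻¹) * t + (1 + q⁻¹) * ω)) = 0)
    (hcont : ContinuousWithinAt f I (ω / (1 - q))) :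
    ∀ t ∈ I, f t = f (ω / (1 - q)) := by
  obtain ⟨hq₀, hq₁⟩ := hq
  intro t ht
  refine (hI.convex.starConvex hω0).apply_eq_of_forall_apply_homothety_eq (sq_nonneg q)
    (by nlinarith) (fun s hs => ?_) hcont ht
  exact apply_sq_homothety_eq_of_hahnSymmDeriv_eq_zero hq₀ hq₁ (hD _ ⟨s, hs, rfl⟩)

/-- If the Hahn symmetric derivative of `f` vanishes on `I^{q,ω} = qI + ω` and `f` is
continuous at `ω₀ = ω/(1-q)`, then `f` is constant on the interval `I`. -/
theorem stmt4 (q ω : ℝ) (hq : q ∈ Set.Ioo (0:ℝ) 1) (hω : 0 ≤ ω)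
    (I : Set ℝ) (hI : I.OrdConnected) (hω0 : ω / (1 - q) ∈ I)
    (f : ℝ → ℝ)
    (hD : ∀ t ∈ (fun s => q * s + ω) '' I,
      (if t = ω / (1 - q) then deriv f t
       else (f (q * t + ω) - f (q⁻¹ * (t - ω))) / ((q - q⁻¹) * t + (1 + q⁻¹) * ω)) = 0)
    (hcont : ContinuousWithinAt f I (ω / (1 - q))) :
    ∀ t ∈ I, f t = f (ω / (1 - q)) :=
  stmt4_general q ω hq I hI hω0 f hD hcont
end

section
/- Let q ∈ (0,1) and f : I → ℝ be continuous at 0, where I is a real interval containing 0. Define F(x) = (1−q²)·x·∑_{n=0}^{∞} q^{2n}·f(q^{2n+1}x). Then for every x ∈ qI, the q-symmetric derivative of F at x equals f(x): if x ≠ 0, (F(qx) − F(q⁻¹x))/((q−q⁻¹)x) = f(x), and F'(0) = f(0). -/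
/-!
Writing `G(c) = ∑ rⁿ f(rⁿ c)` with `r = q²`, one has `F(x) = (1 - q²) x G(q x)`. Splitting off the
first term gives the functional equation `G(c) = f(c) + r G(r c)`, from which the `q`-difference
quotient of `F` at `x ≠ 0` collapses to `f(x)`. At `0` the slope of `F` is `(1 - q²) G(q x)`, and
`G` is continuous at `0` by dominated convergence (Tannery's theorem), with
`(1 - q²) G(0) = f(0)` by the geometric series.
-/

/-- `F(x) = (1−q²)·x·∑_{n=0}^{∞} q^{2n}·f(q^{2n+1}x)`, the `q`-symmetric integral of `f`
from `0` to `x`. -/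
noncomputable def qsymF (q : ℝ) (f : ℝ → ℝ) (x : ℝ) : ℝ :=
  (1 - q ^ 2) * x * ∑' n : ℕ, q ^ (2 * n) * f (q ^ (2 * n + 1) * x)

open Filter Topology

noncomputable def dilationSum (r : ℝ) (f : ℝ → ℝ) (c : ℝ) : ℝ :=
  ∑' n : ℕ, r ^ n * f (r ^ n * c)

section DilationSum

variable {r : ℝ} {f : ℝ → ℝ}

lemma tendsto_pow_mul_nhds_zero (hr : |r| < 1) (c : ℝ) :
    Tendsto (fun n : ℕ => r ^ n * c) atTop (𝓝 0) := by
  simpa using (tendsto_pow_atTop_nhds_zero_of_abs_lt_one hr).mul_const c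

lemma summable_dilation (hr : |r| < 1) (hf : ContinuousAt f 0) (c : ℝ) :
    Summable fun n : ℕ => r ^ n * f (r ^ n * c) := by
  obtain ⟨C, hC⟩ :=
    ((hf.tendsto.comp (tendsto_pow_mul_nhds_zero hr c)).norm).bddAbove_range
  refine .of_norm_bounded ((summable_geometric_of_abs_lt_one hr).abs.mul_right C) fun n => ?_
  rw [norm_mul, norm_pow, Real.norm_eq_abs, abs_pow]
  exact mul_le_mul_of_nonneg_left (hC (Set.mem_range_self n)) (by positivity)

lemma dilationSum_eq_add (hr : |r| < 1) (hf : ContinuousAt f 0) (c : ℝ) :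
    dilationSum r f c = f c + r * dilationSum r f (r * c) := by
  rw [dilationSum, (summable_dilation hr hf c).tsum_eq_zero_add, dilationSum,
    ← tsum_mul_left]
  simp only [pow_zero, one_mul, pow_succ, mul_assoc]
  congr 1
  exact tsum_congr fun n => mul_left_comm _ _ _

lemma one_sub_mul_dilationSum_zero (hr : |r| < 1) :
    (1 - r) * dilationSum r f 0 = f 0 := by
  have hr1 : 1 - r ≠ 0 := by linarith [le_abs_self r]
  simp only [dilationSum, mul_zero, tsum_mul_right, tsum_geometric_of_abs_lt_one hr]
  field_simp

lemma tendsto_dilationSum_zero (hr : |r| < 1) (hf : ContinuousAt f 0) :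
    Tendsto (dilationSum r f) (𝓝 0) (𝓝 (dilationSum r f 0)) := by
  obtain ⟨δ, hδ, hδf⟩ := Metric.continuousAt_iff.mp hf 1 one_pos
  have hterm (n : ℕ) : Tendsto (fun c => r ^ n * f (r ^ n * c)) (𝓝 0)
      (𝓝 (r ^ n * f (r ^ n * 0))) :=
    ((hf.comp_of_eq (continuous_const_mul _).continuousAt (mul_zero _)).tendsto).const_mul _
  refine tendsto_tsum_of_dominated_convergence
    ((summable_geometric_of_abs_lt_one hr).abs.mul_right (‖f 0‖ + 1)) hterm ?_
  filter_upwards [Metric.ball_mem_nhds 0 hδ] with c hc n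
  have hsmall : dist (r ^ n * c) 0 < δ := by
    rw [Metric.mem_ball, dist_zero_right] at hc
    rw [dist_zero_right, norm_mul, norm_pow]
    exact lt_of_le_of_lt (mul_le_of_le_one_left (norm_nonneg c)
      (pow_le_one₀ (norm_nonneg r) hr.le)) hc
  have hbound : ‖f (r ^ n * c)‖ ≤ ‖f 0‖ + 1 := by
    have := hδf hsmall
    rw [dist_eq_norm] at this
    linarith [norm_le_norm_add_norm_sub' (f (r ^ n * c)) (f 0)]
  rw [norm_mul, norm_pow, Real.norm_eq_abs, abs_pow]
  exact mul_le_mul_of_nonneg_left hbound (by positivity)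

end DilationSum

lemma qsymF_eq_dilationSum (q : ℝ) (f : ℝ → ℝ) (x : ℝ) :
    qsymF q f x = (1 - q ^ 2) * x * dilationSum (q ^ 2) f (q * x) := by
  unfold qsymF dilationSum
  congr 1
  exact tsum_congr fun n => by rw [← pow_mul, pow_succ, mul_assoc]

lemma abs_sq_lt_one_of_abs_lt_one {q : ℝ} (hq : |q| < 1) : |q ^ 2| < 1 := by
  rw [abs_pow]
  exact pow_lt_one₀ (abs_nonneg q) hq two_ne_zero

theorem qsymF_symmetric_qDeriv {q : ℝ} {f : ℝ → ℝ} (hq0 : q ≠ 0) (hq : |q| < 1)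
    (hf : ContinuousAt f 0) {x : ℝ} (hx : x ≠ 0) :
    (qsymF q f (q * x) - qsymF q f (q⁻¹ * x)) / ((q - q⁻¹) * x) = f x := by
  have hq2 : q ^ 2 - 1 ≠ 0 := sub_ne_zero.2 ((sq_lt_one_iff_abs_lt_one q).2 hq).ne
  rw [qsymF_eq_dilationSum, qsymF_eq_dilationSum,
    dilationSum_eq_add (abs_sq_lt_one_of_abs_lt_one hq) hf (q * (q⁻¹ * x))]
  rw [show q * (q * x) = q ^ 2 * x by ring, show q * (q⁻¹ * x) = x by field_simp]
  field_simp
  ring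

theorem hasDerivAt_qsymF_zero {q : ℝ} {f : ℝ → ℝ} (hq : |q| < 1) (hf : ContinuousAt f 0) :
    HasDerivAt (qsymF q f) (f 0) 0 := by
  have hr := abs_sq_lt_one_of_abs_lt_one hq
  have hslope : ∀ x ≠ (0 : ℝ),
      (1 - q ^ 2) * dilationSum (q ^ 2) f (q * x) = slope (qsymF q f) 0 x := fun x hx => by
    rw [slope_def_field, qsymF_eq_dilationSum, qsymF_eq_dilationSum]
    field_simp
    ring
  have hlim : Tendsto (fun x => (1 - q ^ 2) * dilationSum (q ^ 2) f (q * x)) (𝓝 0) (𝓝 (f 0)) := by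
    rw [← one_sub_mul_dilationSum_zero (f := f) hr]
    refine ((tendsto_dilationSum_zero hr hf).comp ?_).const_mul _
    simpa using ((continuous_const_mul q).tendsto 0)
  rw [hasDerivAt_iff_tendsto_slope]
  exact (hlim.mono_left nhdsWithin_le_nhds).congr' (eventually_nhdsWithin_of_forall hslope)

theorem stmt6_general (q : ℝ) (hq : q ∈ Set.Ioo (0:ℝ) 1)
    (I : Set ℝ)
    (f : ℝ → ℝ) (hf : ContinuousAt f 0) :
    (∀ x ∈ (fun t => q * t) '' I, x ≠ 0 →
      (qsymF q f (q * x) - qsymF q f (q⁻¹ * x)) / ((q - q⁻¹) * x) = f x) ∧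
    HasDerivAt (qsymF q f) (f 0) 0 := by
  have hq1 : |q| < 1 := by rw [abs_of_pos hq.1]; exact hq.2
  exact ⟨fun x _ hx => qsymF_symmetric_qDeriv hq.1.ne' hq1 hf hx, hasDerivAt_qsymF_zero hq1 hf⟩

/-- If `f` is continuous at `0` (with `0 ∈ I`), then for every `x ∈ qI` the `q`-symmetric
derivative of `F = qsymF q f` at `x` equals `f(x)`: for `x ≠ 0`,
`(F(qx) − F(q⁻¹x))/((q−q⁻¹)x) = f(x)`, and `F'(0) = f(0)`. -/
theorem stmt6 (q : ℝ) (hq : q ∈ Set.Ioo (0:ℝ) 1)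
    (I : Set ℝ) (hI : I.OrdConnected) (h0 : (0:ℝ) ∈ I)
    (f : ℝ → ℝ) (hf : ContinuousAt f 0) :
    (∀ x ∈ (fun t => q * t) '' I, x ≠ 0 →
      (qsymF q f (q * x) - qsymF q f (q⁻¹ * x)) / ((q - q⁻¹) * x) = f x) ∧
    HasDerivAt (qsymF q f) (f 0) 0 :=
  stmt6_general q hq I f hf
end

section
/- Let q ∈ (0,1), f : I → ℝ with I an interval containing 0, and suppose the q-symmetric derivative D̃_q[f] exists on I. Then for all a, b ∈ I, the q-symmetric integral of D̃_q[f] from a to b equals f(b) − f(a); i.e. [(1−q²)b ∑_{n≥0} q^{2n} D̃_q[f](q^{2n+1}b)] − [(1−q²)a ∑_{n≥0} q^{2n} D̃_q[f](q^{2n+1}a)] = f(b) − f(a), provided f is continuous at 0. -/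
/-- `q`-symmetric derivative: `D̃_q[f](x) = (f(qx) − f(q⁻¹x))/((q−q⁻¹)x)` for `x ≠ 0`,
and `f'(0)` at `x = 0`. -/
noncomputable def qsymD (q : ℝ) (f : ℝ → ℝ) (x : ℝ) : ℝ :=
  if x = 0 then deriv f 0 else (f (q * x) - f (q⁻¹ * x)) / ((q - q⁻¹) * x)

lemma qsymD_key (q : ℝ) (hq : q ∈ Set.Ioo (0:ℝ) 1)
    (I : Set ℝ) (hI : I.OrdConnected) (h0 : (0:ℝ) ∈ I)
    (f : ℝ → ℝ) (hdiff : DifferentiableAt ℝ f 0)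
    (hcont : ContinuousWithinAt f I 0)
    (x : ℝ) (hx : x ∈ I) :
    (1 - q ^ 2) * x * ∑' n : ℕ, q ^ (2 * n) * qsymD q f (q ^ (2 * n + 1) * x)
      = f x - f 0 := by
  obtain ⟨hq0, hq1⟩ := hq
  rcases eq_or_ne x 0 with rfl | hx0
  · simp
  · have hqne : q ≠ 0 := ne_of_gt hq0
    have hqq : q - q⁻¹ ≠ 0 := by
      have h2 : q * q < q * q⁻¹ := by
        rw [mul_inv_cancel₀ hqne]; nlinarith
      have : q < q⁻¹ := lt_of_mul_lt_mul_left h2 hq0.le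
      linarith
    set u : ℕ → ℝ := fun n => f (q ^ (2 * n) * x) with hu_def
    set g : ℕ → ℝ := fun n => q ^ (2 * n) * qsymD q f (q ^ (2 * n + 1) * x) with hg_def
    have hyne : ∀ n : ℕ, q ^ (2 * n + 1) * x ≠ 0 := fun n =>
      mul_ne_zero (pow_ne_zero _ hqne) hx0
    have hq2ne : q ^ 2 - 1 ≠ 0 := by nlinarith
    -- term identity
    have hterm : ∀ n : ℕ, (1 - q ^ 2) * x * g n = u n - u (n + 1) := by
      intro n
      have e1 : q * (q ^ (2 * n + 1) * x) = q ^ (2 * (n + 1)) * x := by ring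
      have e2 : q⁻¹ * (q ^ (2 * n + 1) * x) = q ^ (2 * n) * x := by
        have h5 : q⁻¹ * q ^ (2 * n + 1) = q ^ (2 * n) := by
          rw [pow_succ, mul_comm (q ^ (2 * n)) q, ← mul_assoc, inv_mul_cancel₀ hqne, one_mul]
        rw [← mul_assoc, h5]
      have e3 : (q - q⁻¹) * (q ^ (2 * n + 1) * x) = (q ^ 2 - 1) * (q ^ (2 * n) * x) := by
        rw [sub_mul, e1, e2]; ring
      have htne : q ^ (2 * n) * x ≠ 0 := mul_ne_zero (pow_ne_zero _ hqne) hx0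
      simp only [hg_def, qsymD, if_neg (hyne n), e1, e2, e3, hu_def]
      generalize f (q ^ (2 * (n + 1)) * x) = A
      generalize f (q ^ (2 * n) * x) = B
      field_simp
      ring
    -- tendsto of u
    have hu : Filter.Tendsto u Filter.atTop (nhds (f 0)) := by
      apply hcont.tendsto.comp
      rw [tendsto_nhdsWithin_iff]
      constructor
      · have h1 : Filter.Tendsto (fun n : ℕ => (q ^ 2) ^ n * x) Filter.atTop (nhds (0 * x)) :=
          (tendsto_pow_atTop_nhds_zero_of_lt_one (by positivity) (by nlinarith)).mul_const x
        rw [zero_mul] at h1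
        refine h1.congr fun n => ?_
        rw [← pow_mul]
      · refine Filter.Eventually.of_forall fun n => ?_
        have hsub := hI.uIcc_subset h0 hx
        apply hsub
        have hp1 : q ^ (2 * n) ≤ 1 := pow_le_one₀ (le_of_lt hq0) (le_of_lt hq1)
        have hp0 : (0:ℝ) < q ^ (2 * n) := by positivity
        rcases le_total 0 x with hle | hle
        · exact Set.mem_uIcc.2 (Or.inl ⟨by nlinarith, by nlinarith⟩)
        · exact Set.mem_uIcc.2 (Or.inr ⟨by nlinarith, by nlinarith⟩)
    -- summability of g
    have hsum : Summable g := by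
      set d := deriv f 0
      have hslope : Filter.Tendsto (slope f 0) (nhdsWithin 0 {(0:ℝ)}ᶜ) (nhds d) :=
        hasDerivAt_iff_tendsto_slope.mp hdiff.hasDerivAt
      have hy0 : Filter.Tendsto (fun n : ℕ => q ^ (2 * n + 1) * x) Filter.atTop (nhds 0) := by
        have h1 : Filter.Tendsto (fun n : ℕ => (q ^ 2) ^ n * (q * x)) Filter.atTop
            (nhds (0 * (q * x))) :=
          (tendsto_pow_atTop_nhds_zero_of_lt_one (by positivity) (by nlinarith)).mul_const _
        rw [zero_mul] at h1
        refine h1.congr fun n => ?_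
        rw [← pow_mul]
        ring
      have hmk : ∀ c : ℝ, c ≠ 0 → Filter.Tendsto
          (fun n : ℕ => slope f 0 (c * (q ^ (2 * n + 1) * x))) Filter.atTop (nhds d) := by
        intro c hc
        apply hslope.comp
        rw [tendsto_nhdsWithin_iff]
        constructor
        · have := hy0.const_mul c
          rwa [mul_zero] at this
        · exact Filter.Eventually.of_forall fun n =>
            mul_ne_zero hc (hyne n)
      have hveq : ∀ y : ℝ, y ≠ 0 → qsymD q f y =
          slope f 0 (q * y) * (q / (q - q⁻¹))
            - slope f 0 (q⁻¹ * y) * (q⁻¹ / (q - q⁻¹)) := by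
        intro y hy
        have hy1 : q * y ≠ 0 := mul_ne_zero hqne hy
        have hy2 : q⁻¹ * y ≠ 0 := mul_ne_zero (inv_ne_zero hqne) hy
        simp only [qsymD, if_neg hy, slope_def_field, sub_zero]
        generalize f (q * y) = A
        generalize f (q⁻¹ * y) = B
        generalize f 0 = C
        have hd : q ^ 2 * y - y ≠ 0 := by
          have h6 : q ^ 2 * y - y = (q ^ 2 - 1) * y := by ring
          rw [h6]; exact mul_ne_zero hq2ne hy
        have hq2ne' : q * q - 1 ≠ 0 := by
          intro h; apply hq2ne; nlinarith
        field_simp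
        ring
      have hv : Filter.Tendsto (fun n : ℕ => qsymD q f (q ^ (2 * n + 1) * x)) Filter.atTop
          (nhds (d * (q / (q - q⁻¹)) - d * (q⁻¹ / (q - q⁻¹)))) := by
        refine Filter.Tendsto.congr (fun n => (hveq _ (hyne n)).symm) ?_
        exact (((hmk q hqne).mul_const _).sub ((hmk q⁻¹ (inv_ne_zero hqne)).mul_const _))
      have hO : g =O[Filter.atTop] fun n : ℕ => (q ^ 2) ^ n := by
        have h1 := (Asymptotics.isBigO_refl (fun n : ℕ => (q ^ 2) ^ n) Filter.atTop).mul
          (hv.isBigO_one ℝ)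
        simp only [mul_one] at h1
        have hgeq : g = fun n : ℕ => (q ^ 2) ^ n * qsymD q f (q ^ (2 * n + 1) * x) := by
          funext n; simp only [hg_def]; rw [pow_mul]
        rw [hgeq]
        exact h1
      exact summable_of_isBigO_nat (summable_geometric_of_lt_one (by positivity)
        (by nlinarith)) hO
    -- telescoping
    have h1 : Filter.Tendsto (fun n : ℕ => ∑ i ∈ Finset.range n, g i) Filter.atTop
        (nhds (∑' n, g n)) := hsum.hasSum.tendsto_sum_nat
    have h2 := h1.const_mul ((1 - q ^ 2) * x)
    have h3 : (fun n : ℕ => (1 - q ^ 2) * x * ∑ i ∈ Finset.range n, g i)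
        = fun n : ℕ => u 0 - u n := by
      funext n
      rw [Finset.mul_sum]
      rw [Finset.sum_congr rfl fun i _ => hterm i]
      exact Finset.sum_range_sub' u n
    rw [h3] at h2
    have h4 : Filter.Tendsto (fun n : ℕ => u 0 - u n) Filter.atTop (nhds (u 0 - f 0)) :=
      tendsto_const_nhds.sub hu
    have := tendsto_nhds_unique h2 h4
    rw [this]
    simp [hu_def]

/-- Fundamental theorem: if the `q`-symmetric derivative of `f` exists on `I` (an interval
containing `0`) and `f` is continuous at `0`, then for all `a, b ∈ I` the `q`-symmetric
integral of `D̃_q[f]` from `a` to `b` equals `f(b) − f(a)`. -/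
theorem stmt7 (q : ℝ) (hq : q ∈ Set.Ioo (0:ℝ) 1)
    (I : Set ℝ) (hI : I.OrdConnected) (h0 : (0:ℝ) ∈ I)
    (f : ℝ → ℝ) (hdiff : DifferentiableAt ℝ f 0)
    (hcont : ContinuousWithinAt f I 0)
    (a b : ℝ) (ha : a ∈ I) (hb : b ∈ I) :
    ((1 - q ^ 2) * b * ∑' n : ℕ, q ^ (2 * n) * qsymD q f (q ^ (2 * n + 1) * b))
      - ((1 - q ^ 2) * a * ∑' n : ℕ, q ^ (2 * n) * qsymD q f (q ^ (2 * n + 1) * a))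
      = f b - f a := by
  rw [qsymD_key q hq I hI h0 f hdiff hcont b hb,
    qsymD_key q hq I hI h0 f hdiff hcont a ha]
  ring
end

section
/- Let α, β ≥ 0 with α + β > 0, a < b with b ∈ {a + kα : k ∈ ℕ₀} and a ∈ {b − kβ : k ∈ ℕ₀}, and let f, g be α,β-symmetric integrable on [a,b]. If |f(t)| ≤ g(t) for all t ∈ {a+kα : k ∈ ℕ₀} ∪ {b−kβ : k ∈ ℕ₀}, then |∫_a^b f d_{α,β}t| ≤ ∫_a^b g d_{α,β}t, where ∫_a^b h d_{α,β}t = (α/(α+β))·[α∑_{k≥0} h(a+kα) − α∑_{k≥0} h(b+kα)] + (β/(α+β))·[β∑_{k≥0} h(b−kβ) − β∑_{k≥0} h(a−kβ)]. -/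
/-- The `α,β`-symmetric integral of `h` from `a` to `b`: the convex combination, with
weights `α/(α+β)` and `β/(α+β)`, of the `α`-forward and `β`-backward Nörlund integrals. -/
noncomputable def symInt (α β a b : ℝ) (h : ℝ → ℝ) : ℝ :=
  (α / (α + β)) * ((α * ∑' k : ℕ, h (a + k * α)) - (α * ∑' k : ℕ, h (b + k * α)))
    + (β / (α + β)) * ((β * ∑' k : ℕ, h (b - k * β)) - (β * ∑' k : ℕ, h (a - k * β)))

/-- `h` is `α,β`-symmetric integrable on `[a,b]`: all four relevant series converge. -/
def SymIntegrable (α β a b : ℝ) (h : ℝ → ℝ) : Prop :=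
  Summable (fun k : ℕ => h (a + k * α)) ∧ Summable (fun k : ℕ => h (b + k * α)) ∧
  Summable (fun k : ℕ => h (b - k * β)) ∧ Summable (fun k : ℕ => h (a - k * β))

lemma tsum_diff_eq (u v : ℕ → ℝ) (k₀ : ℕ) (hv : ∀ k, v k = u (k + k₀))
    (hu : Summable u) : (∑' k, u k) - (∑' k, v k) = ∑ k ∈ Finset.range k₀, u k := by
  rw [tsum_congr hv, ← Summable.sum_add_tsum_nat_add k₀ hu]
  ring

/-- If `|f(t)| ≤ g(t)` for all `t ∈ {a+kα} ∪ {b−kβ}` (with `b ∈ {a+kα}`, `a ∈ {b−kβ}`),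
then `|∫_a^b f d_{α,β}t| ≤ ∫_a^b g d_{α,β}t`. -/
theorem stmt13 (α β a b : ℝ) (hα : 0 ≤ α) (hβ : 0 ≤ β) (hαβ : 0 < α + β)
    (hab : a < b) (hbA : ∃ k : ℕ, b = a + k * α) (haB : ∃ k : ℕ, a = b - k * β)
    (f g : ℝ → ℝ)
    (hf : SymIntegrable α β a b f) (hg : SymIntegrable α β a b g)
    (hle : ∀ t : ℝ, ((∃ k : ℕ, t = a + k * α) ∨ (∃ k : ℕ, t = b - k * β)) →
      |f t| ≤ g t) :
    |symInt α β a b f| ≤ symInt α β a b g := by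
  obtain ⟨k₀, hk₀⟩ := hbA
  obtain ⟨k₁, hk₁⟩ := haB
  have hα' : 0 < α := by
    rcases hα.lt_or_eq with h | h
    · exact h
    · exfalso; rw [← h] at hk₀; simp at hk₀; linarith
  have hβ' : 0 < β := by
    rcases hβ.lt_or_eq with h | h
    · exact h
    · exfalso; rw [← h] at hk₁; simp at hk₁; linarith
  have hfwd : ∀ h' : ℝ → ℝ, Summable (fun k : ℕ => h' (a + k * α)) →
      (∑' k : ℕ, h' (a + k * α)) - (∑' k : ℕ, h' (b + k * α))
        = ∑ k ∈ Finset.range k₀, h' (a + k * α) := by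
    intro h' hs
    refine tsum_diff_eq _ _ k₀ (fun k => ?_) hs
    congr 1
    rw [hk₀]; push_cast; ring
  have hbwd : ∀ h' : ℝ → ℝ, Summable (fun k : ℕ => h' (b - k * β)) →
      (∑' k : ℕ, h' (b - k * β)) - (∑' k : ℕ, h' (a - k * β))
        = ∑ k ∈ Finset.range k₁, h' (b - k * β) := by
    intro h' hs
    refine tsum_diff_eq _ _ k₁ (fun k => ?_) hs
    congr 1
    rw [hk₁]; push_cast; ring
  have hsym : ∀ h' : ℝ → ℝ, SymIntegrable α β a b h' →
      symInt α β a b h' = (α / (α + β)) * α * (∑ k ∈ Finset.range k₀, h' (a + k * α))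
        + (β / (α + β)) * β * (∑ k ∈ Finset.range k₁, h' (b - k * β)) := by
    intro h' ⟨h1, _, h3, _⟩
    rw [symInt, ← mul_sub α, ← mul_sub β, hfwd h' h1, hbwd h' h3]
    ring
  rw [hsym f hf, hsym g hg]
  have c1 : 0 ≤ α / (α + β) * α := by positivity
  have c2 : 0 ≤ β / (α + β) * β := by positivity
  calc |α / (α + β) * α * (∑ k ∈ Finset.range k₀, f (a + k * α))
        + β / (α + β) * β * (∑ k ∈ Finset.range k₁, f (b - k * β))|
      ≤ α / (α + β) * α * |∑ k ∈ Finset.range k₀, f (a + k * α)|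
        + β / (α + β) * β * |∑ k ∈ Finset.range k₁, f (b - k * β)| := by
        refine (abs_add_le _ _).trans ?_
        rw [abs_mul (α / (α + β) * α), abs_mul (β / (α + β) * β), abs_of_nonneg c1, abs_of_nonneg c2]
    _ ≤ α / (α + β) * α * (∑ k ∈ Finset.range k₀, |f (a + k * α)|)
        + β / (α + β) * β * (∑ k ∈ Finset.range k₁, |f (b - k * β)|) := by
        gcongr <;> exact Finset.abs_sum_le_sum_abs _ _
    _ ≤ α / (α + β) * α * (∑ k ∈ Finset.range k₀, g (a + k * α))
        + β / (α + β) * β * (∑ k ∈ Finset.range k₁, g (b - k * β)) := by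
        gcongr with k _ k _
        · exact hle _ (Or.inl ⟨k, rfl⟩)
        · exact hle _ (Or.inr ⟨k, rfl⟩)
end

section
/- (α,β-symmetric Hölder inequality) Let α, β ≥ 0 with α + β ≠ 0, a < b with b ∈ {a+kα : k ∈ ℕ₀} and a ∈ {b−kβ : k ∈ ℕ₀}, p > 1, q = p/(p−1). If |f| and |g| are α,β-symmetric integrable on [a,b], then ∫_a^b |f(t)g(t)| d_{α,β}t ≤ (∫_a^b |f(t)|^p d_{α,β}t)^{1/p} · (∫_a^b |g(t)|^q d_{α,β}t)^{1/q}. -/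
open Finset

section Summability

variable {ι : Type*} {x : ι → ℝ}

lemma Summable.eventually_abs_lt_one (hx : Summable fun k => |x k|) :
    ∀ᶠ k in Filter.cofinite, |x k| < 1 :=
  hx.tendsto_cofinite_zero.eventually_lt_const one_pos

lemma summable_abs_mul {y : ι → ℝ} (hx : Summable fun k => |x k|)
    (hy : Summable fun k => |y k|) : Summable fun k => |x k * y k| := by
  refine hx.of_norm_bounded_eventually ?_
  filter_upwards [hy.eventually_abs_lt_one] with k hk
  rw [Real.norm_eq_abs, abs_abs, abs_mul]
  exact mul_le_of_le_one_right (abs_nonneg _) hk.le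

lemma summable_abs_rpow (hx : Summable fun k => |x k|) {r : ℝ} (hr : 1 ≤ r) :
    Summable fun k => |x k| ^ r := by
  refine hx.of_norm_bounded_eventually ?_
  filter_upwards [hx.eventually_abs_lt_one] with k hk
  rw [Real.norm_eq_abs, abs_of_nonneg (Real.rpow_nonneg (abs_nonneg _) _)]
  exact Real.rpow_le_self_of_le_one (abs_nonneg _) hk.le hr

end Summability

theorem inner_abs_le_weighted_Lp_mul_Lq {ι : Type*} (s : Finset ι) {w : ι → ℝ}
    (hw : ∀ i ∈ s, 0 ≤ w i) (f g : ι → ℝ) {p q : ℝ} (hpq : p.HolderConjugate q) :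
    ∑ i ∈ s, w i * |f i * g i|
      ≤ (∑ i ∈ s, w i * |f i| ^ p) ^ (1 / p) * (∑ i ∈ s, w i * |g i| ^ q) ^ (1 / q) := by
  have holder := Real.inner_le_Lp_mul_Lq_of_nonneg s hpq
    (f := fun i => w i ^ (1 / p) * |f i|) (g := fun i => w i ^ (1 / q) * |g i|)
    (fun i hi => mul_nonneg (Real.rpow_nonneg (hw i hi) _) (abs_nonneg _))
    (fun i hi => mul_nonneg (Real.rpow_nonneg (hw i hi) _) (abs_nonneg _))
  have weight_pow {r : ℝ} (hr : r ≠ 0) {i : ι} (hi : i ∈ s) (t : ℝ) :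
      (w i ^ (1 / r) * |t|) ^ r = w i * |t| ^ r := by
    rw [Real.mul_rpow (Real.rpow_nonneg (hw i hi) _) (abs_nonneg _), ← Real.rpow_mul (hw i hi),
      one_div_mul_cancel hr, Real.rpow_one]
  have weight_mul {i : ι} (hi : i ∈ s) :
      w i ^ (1 / p) * |f i| * (w i ^ (1 / q) * |g i|) = w i * |f i * g i| := by
    rw [abs_mul, mul_mul_mul_comm, ← Real.rpow_add' (hw i hi) (by simp [hpq.inv_add_inv_eq_one]),
      one_div, one_div, hpq.inv_add_inv_eq_one, Real.rpow_one]
  rwa [sum_congr rfl fun i hi => weight_mul hi,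
    sum_congr rfl fun i hi => weight_pow hpq.ne_zero hi (f i),
    sum_congr rfl fun i hi => weight_pow hpq.symm.ne_zero hi (g i)] at holder

def symNode (α β a b : ℝ) : ℕ ⊕ ℕ → ℝ :=
  Sum.elim (fun k => a + k * α) (fun k => b - k * β)

noncomputable def symWeight (α β : ℝ) : ℕ ⊕ ℕ → ℝ :=
  Sum.elim (fun _ => α * α / (α + β)) (fun _ => β * β / (α + β))

lemma symWeight_nonneg {α β : ℝ} (hα : 0 ≤ α) (hβ : 0 ≤ β) (i : ℕ ⊕ ℕ) :
    0 ≤ symWeight α β i := by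
  cases i <;> simp only [symWeight, Sum.elim_inl, Sum.elim_inr] <;> positivity

lemma symInt_eq_sum_disjSum {α β a b : ℝ} {K L : ℕ} (hK : b = a + K * α) (hL : a = b - L * β)
    (h : ℝ → ℝ) (ha : Summable fun k : ℕ => h (a + k * α))
    (hb : Summable fun k : ℕ => h (b - k * β)) :
    symInt α β a b h
      = ∑ i ∈ (range K).disjSum (range L), symWeight α β i * h (symNode α β a b i) := by
  have forward : ∑' k : ℕ, h (a + k * α) - ∑' k : ℕ, h (b + k * α)
      = ∑ k ∈ range K, h (a + k * α) := by
    rw [← ha.sum_add_tsum_nat_add K]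
    simp only [hK, Nat.cast_add, add_mul, add_assoc, add_comm (K * α), add_sub_cancel_right]
  have backward : ∑' k : ℕ, h (b - k * β) - ∑' k : ℕ, h (a - k * β)
      = ∑ k ∈ range L, h (b - k * β) := by
    rw [← hb.sum_add_tsum_nat_add L]
    simp only [hL, Nat.cast_add, add_mul, sub_add_eq_sub_sub, sub_right_comm _ (L * β),
      add_sub_cancel_right]
  rw [sum_disjSum]
  simp only [symWeight, symNode, Sum.elim_inl, Sum.elim_inr, ← mul_sum, ← forward, ← backward,
    symInt]
  ring

theorem stmt14_general (α β a b : ℝ)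
    (hab : a < b) (hbA : ∃ k : ℕ, b = a + k * α) (haB : ∃ k : ℕ, a = b - k * β)
    (p q : ℝ) (hp : 1 < p) (hq : q = p / (p - 1))
    (f g : ℝ → ℝ)
    (hf : SymIntegrable α β a b (fun t => |f t|))
    (hg : SymIntegrable α β a b (fun t => |g t|)) :
    symInt α β a b (fun t => |f t * g t|)
      ≤ (symInt α β a b (fun t => |f t| ^ p)) ^ (1 / p)
        * (symInt α β a b (fun t => |g t| ^ q)) ^ (1 / q) := by
  obtain ⟨K, hK⟩ := hbA
  obtain ⟨L, hL⟩ := haB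
  have hα : 0 < α := pos_of_mul_pos_right (by linarith) K.cast_nonneg
  have hβ : 0 < β := pos_of_mul_pos_right (by linarith) L.cast_nonneg
  have hpq : p.HolderConjugate q := (Real.holderConjugate_iff_eq_conjExponent hp).2 hq
  obtain ⟨hfa, -, hfb, -⟩ := hf
  obtain ⟨hga, -, hgb, -⟩ := hg
  rw [symInt_eq_sum_disjSum hK hL (fun t => |f t * g t|) (summable_abs_mul hfa hga)
      (summable_abs_mul hfb hgb),
    symInt_eq_sum_disjSum hK hL (fun t => |f t| ^ p) (summable_abs_rpow hfa hpq.lt.le)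
      (summable_abs_rpow hfb hpq.lt.le),
    symInt_eq_sum_disjSum hK hL (fun t => |g t| ^ q) (summable_abs_rpow hga hpq.symm.lt.le)
      (summable_abs_rpow hgb hpq.symm.lt.le)]
  exact inner_abs_le_weighted_Lp_mul_Lq _ (fun i _ => symWeight_nonneg hα.le hβ.le i) _ _ hpq

/-- `α,β`-symmetric Hölder inequality: for `p > 1`, `q = p/(p−1)`, if `|f|` and `|g|`
are `α,β`-symmetric integrable on `[a,b]`, then
`∫_a^b |fg| d_{α,β}t ≤ (∫_a^b |f|^p d_{α,β}t)^{1/p} · (∫_a^b |g|^q d_{α,β}t)^{1/q}`. -/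
theorem stmt14 (α β a b : ℝ) (hα : 0 ≤ α) (hβ : 0 ≤ β) (hαβ : α + β ≠ 0)
    (hab : a < b) (hbA : ∃ k : ℕ, b = a + k * α) (haB : ∃ k : ℕ, a = b - k * β)
    (p q : ℝ) (hp : 1 < p) (hq : q = p / (p - 1))
    (f g : ℝ → ℝ)
    (hf : SymIntegrable α β a b (fun t => |f t|))
    (hg : SymIntegrable α β a b (fun t => |g t|)) :
    symInt α β a b (fun t => |f t * g t|)
      ≤ (symInt α β a b (fun t => |f t| ^ p)) ^ (1 / p)
        * (symInt α β a b (fun t => |g t| ^ q)) ^ (1 / q) :=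
  stmt14_general α β a b hab hbA haB p q hp hq f g hf hg
end

section
/- Let a < b be real numbers and α₁, α₂, β₁, β₂ ∈ ℝ with α₁ ≠ β₁ (problem data). Consider the Hahn symmetric variational functional L[y] = ∫_a^b ((D̃_{q,ω}[y](t))² + q·y(σ(t)) + t·D̃_{q,ω}[y](t)) d̃_{q,ω}t over y with y(a) = α, y(b) = β. Then the affine function y(t) = ((α−β)/(a−b))·t + (aβ−bα)/(a−b) is a global minimizer of L among admissible functions, since for any admissible y the difference L[y] − L[ȳ] with ȳ = y − (ct+d), c = (α−β)/(a−b), d = (aβ−bα)/(a−b), equals ∫_a^b (D̃_{q,ω}[ȳ](t))² d̃_{q,ω}t ≥ 0 up to exact terms vanishing at the endpoints. -/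
/-- Hahn symmetric derivative: `(y(σ(t)) − y(σ⁻¹(t)))/(σ(t) − σ⁻¹(t))` for `t ≠ ω₀`,
where `σ(t) = qt + ω` and `σ⁻¹(t) = q⁻¹(t − ω)`; the ordinary derivative at `ω₀`. -/
noncomputable def hsD (q ω : ℝ) (y : ℝ → ℝ) (t : ℝ) : ℝ :=
  if t = ω / (1 - q) then deriv y t
  else (y (q * t + ω) - y (q⁻¹ * (t - ω))) / ((q * t + ω) - q⁻¹ * (t - ω))

/-- Hahn symmetric integral from `ω₀` to `x`:
`(σ⁻¹(x) − σ(x))·∑_{n≥0} q^{2n+1} g(σ^{2n+1}(x))`. -/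
noncomputable def hsInt (q ω : ℝ) (g : ℝ → ℝ) (x : ℝ) : ℝ :=
  (q⁻¹ * (x - ω) - (q * x + ω)) * ∑' n : ℕ, q ^ (2 * n + 1) * g ((fun s => q * s + ω)^[2 * n + 1] x)

/-- The `q,ω`-interval determined by `a` and `b`: `{σ^{2n+1}(a)} ∪ {σ^{2n+1}(b)} ∪ {ω₀}`. -/
def hsPts (q ω a b : ℝ) : Set ℝ :=
  {ω / (1 - q)} ∪ ⋃ n : ℕ, {(fun s => q * s + ω)^[2 * n + 1] a, (fun s => q * s + ω)^[2 * n + 1] b}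

/-- Admissible function for the Hahn symmetric variational problem: satisfies the boundary
conditions, `y` and `D̃_{q,ω}[y]` are bounded on the `q,ω`-interval and continuous at `ω₀`. -/
def hsAdmissible (q ω a b A B : ℝ) (y : ℝ → ℝ) : Prop :=
  y a = A ∧ y b = B ∧
  (∃ M : ℝ, ∀ t ∈ hsPts q ω a b, |y t| ≤ M ∧ |hsD q ω y t| ≤ M) ∧
  ContinuousAt y (ω / (1 - q)) ∧ ContinuousAt (hsD q ω y) (ω / (1 - q))

/-- Integrand `(D̃_{q,ω}[y](t))² + q·y(σ(t)) + t·D̃_{q,ω}[y](t)`. -/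
noncomputable def hsLag (q ω : ℝ) (y : ℝ → ℝ) (t : ℝ) : ℝ :=
  (hsD q ω y t) ^ 2 + q * y (q * t + ω) + t * hsD q ω y t

/-- The variational functional `L[y] = ∫_a^b hsLag(y) d̃_{q,ω}t`. -/
noncomputable def hsFunc (q ω a b : ℝ) (y : ℝ → ℝ) : ℝ :=
  hsInt q ω (hsLag q ω y) b - hsInt q ω (hsLag q ω y) a

/-!
Write an admissible `y` as `c t + d + u t`, where `c t + d` is the affine interpolant and `u`
vanishes at `b` and at `a = ω₀ = ω / (1 - q)`, the fixed point of `σ`. At every `t ≠ ω₀` a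
symmetric product rule gives `L(y)(t) = L(c t + d)(t) + (D̃u(t))² + D̃F(t)` with
`F(s) = (2c + ω₀ + q(s − ω₀)) u(s)`.
The Hahn symmetric integral obeys the fundamental theorem `∫_{ω₀}^b D̃F = F(b) − F(ω₀)`, since its
series telescopes over the even points `σ^{2n}(b) → ω₀`; hence the last term integrates to `0` and
`L[y] − L[c t + d] = ∫_{ω₀}^b (D̃u)² ≥ 0`. All series involved converge absolutely, their terms
being bounded multiples of `q^{2n+1}`.
-/

open Filter Topology Set

section HahnSymmetric

variable {q ω : ℝ}

def hsSeries (q ω : ℝ) (g : ℝ → ℝ) (x : ℝ) (n : ℕ) : ℝ :=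
  q ^ (2 * n + 1) * g ((fun s => q * s + ω)^[2 * n + 1] x)

theorem hsInt_def (g : ℝ → ℝ) (x : ℝ) :
    hsInt q ω g x = (q⁻¹ * (x - ω) - (q * x + ω)) * ∑' n, hsSeries q ω g x n :=
  rfl

theorem hsSeries_add (f g : ℝ → ℝ) (x : ℝ) :
    hsSeries q ω (f + g) x = hsSeries q ω f x + hsSeries q ω g x :=
  funext fun _ => mul_add _ _ _

theorem hsIter_eq (hq : q ≠ 1) (k : ℕ) (x : ℝ) :
    (fun s => q * s + ω)^[k] x = q ^ k * (x - ω / (1 - q)) + ω / (1 - q) := by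
  have h1q : 1 - q ≠ 0 := sub_ne_zero.2 hq.symm
  induction k with
  | zero => simp
  | succ k ih =>
    rw [Function.iterate_succ_apply', ih]
    field_simp
    ring

theorem hsIter_ne (hq0 : q ≠ 0) (hq1 : q ≠ 1) {x : ℝ} (hx : x ≠ ω / (1 - q)) (k : ℕ) :
    (fun s => q * s + ω)^[k] x ≠ ω / (1 - q) := by
  rw [hsIter_eq hq1, Ne, add_eq_right, mul_eq_zero, not_or]
  exact ⟨pow_ne_zero k hq0, sub_ne_zero.2 hx⟩

theorem hsIter_mem_Icc (hq0 : 0 ≤ q) (hq1 : q < 1) {x : ℝ} (hx : ω / (1 - q) ≤ x) (k : ℕ) :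
    (fun s => q * s + ω)^[k] x ∈ Icc (ω / (1 - q)) x := by
  have hqk : q ^ k ≤ 1 := pow_le_one₀ hq0 hq1.le
  rw [hsIter_eq hq1.ne]
  constructor <;> nlinarith [pow_nonneg hq0 k]

theorem tendsto_hsIter (hq0 : 0 ≤ q) (hq1 : q < 1) (x : ℝ) :
    Tendsto (fun k => (fun s => q * s + ω)^[k] x) atTop (𝓝 (ω / (1 - q))) := by
  simp_rw [hsIter_eq hq1.ne]
  simpa using ((tendsto_pow_atTop_nhds_zero_of_lt_one hq0 hq1).mul_const
    (x - ω / (1 - q))).add_const (ω / (1 - q))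

theorem hsIter_mem_hsPts (a b : ℝ) (n : ℕ) :
    (fun s => q * s + ω)^[2 * n + 1] b ∈ hsPts q ω a b :=
  Or.inr (mem_iUnion.2 ⟨n, Or.inr rfl⟩)

theorem hsPts_subset_Icc (hq0 : 0 ≤ q) (hq1 : q < 1) {a b : ℝ} (ha : ω / (1 - q) ≤ a)
    (hab : a ≤ b) : hsPts q ω a b ⊆ Icc (ω / (1 - q)) b := by
  rintro t (rfl | ht)
  · exact ⟨le_rfl, ha.trans hab⟩
  · obtain ⟨n, rfl | rfl⟩ := mem_iUnion.1 ht
    · exact Icc_subset_Icc_right hab (hsIter_mem_Icc hq0 hq1 ha _)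
    · exact hsIter_mem_Icc hq0 hq1 (ha.trans hab) _

theorem summable_hsSeries (hq0 : 0 ≤ q) (hq1 : q < 1) {g : ℝ → ℝ} {x C : ℝ}
    (hg : ∀ n, |g ((fun s => q * s + ω)^[2 * n + 1] x)| ≤ C) : Summable (hsSeries q ω g x) := by
  refine Summable.of_norm_bounded ((summable_geometric_of_lt_one (sq_nonneg q)
    (by nlinarith)).mul_left (q * C)) fun n => ?_
  rw [hsSeries, Real.norm_eq_abs, abs_mul, abs_of_nonneg (pow_nonneg hq0 _)]
  calc q ^ (2 * n + 1) * |g _| ≤ q ^ (2 * n + 1) * C := by gcongr; exact hg n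
    _ = q * C * (q ^ 2) ^ n := by ring

theorem summable_hsSeries_of_continuousOn (hq0 : 0 ≤ q) (hq1 : q < 1) {g : ℝ → ℝ} {x : ℝ}
    (hx : ω / (1 - q) ≤ x) (hg : ContinuousOn g (Icc (ω / (1 - q)) x)) :
    Summable (hsSeries q ω g x) := by
  obtain ⟨C, hC⟩ := isCompact_Icc.exists_bound_of_continuousOn hg
  exact summable_hsSeries hq0 hq1 fun n => hC _ (hsIter_mem_Icc hq0 hq1 hx _)

theorem hsInt_eq (hq0 : q ≠ 0) (hq1 : q ≠ 1) (g : ℝ → ℝ) (x : ℝ) :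
    hsInt q ω g x = (q⁻¹ - q) * (x - ω / (1 - q)) * ∑' n, hsSeries q ω g x n := by
  have h1q : 1 - q ≠ 0 := sub_ne_zero.2 hq1.symm
  rw [hsInt_def]
  congr 1
  field_simp
  ring

theorem hsInt_fixedPoint (hq0 : q ≠ 0) (hq1 : q ≠ 1) (g : ℝ → ℝ) :
    hsInt q ω g (ω / (1 - q)) = 0 := by
  rw [hsInt_eq hq0 hq1, sub_self, mul_zero, zero_mul]

theorem hsInt_congr {f g : ℝ → ℝ} {x : ℝ}
    (h : ∀ n, f ((fun s => q * s + ω)^[2 * n + 1] x) = g ((fun s => q * s + ω)^[2 * n + 1] x)) :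
    hsInt q ω f x = hsInt q ω g x := by
  simp only [hsInt, h]

theorem hsInt_add {f g : ℝ → ℝ} {x : ℝ} (hf : Summable (hsSeries q ω f x))
    (hg : Summable (hsSeries q ω g x)) : hsInt q ω (f + g) x = hsInt q ω f x + hsInt q ω g x := by
  rw [hsInt_def, hsInt_def, hsInt_def, hsSeries_add, Pi.add_def, hf.tsum_add hg, mul_add]

theorem hsInt_nonneg (hq0 : 0 < q) (hq1 : q < 1) {g : ℝ → ℝ} {x : ℝ} (hx : ω / (1 - q) ≤ x)
    (hg : ∀ n, 0 ≤ g ((fun s => q * s + ω)^[2 * n + 1] x)) : 0 ≤ hsInt q ω g x := by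
  have hq : q ≤ q⁻¹ := (hq1.trans ((one_lt_inv₀ hq0).2 hq1)).le
  rw [hsInt_eq hq0.ne' hq1.ne]
  exact mul_nonneg (mul_nonneg (sub_nonneg.2 hq) (sub_nonneg.2 hx))
    (tsum_nonneg fun n => mul_nonneg (pow_nonneg hq0.le _) (hg n))

variable (ω) in
theorem sigma_sub_fixedPoint (hq1 : q ≠ 1) (t : ℝ) :
    q * t + ω - ω / (1 - q) = q * (t - ω / (1 - q)) := by
  have h1q : 1 - q ≠ 0 := sub_ne_zero.2 hq1.symm
  field_simp
  ring

variable (ω) in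
theorem sigmaInv_sub_fixedPoint (hq0 : q ≠ 0) (hq1 : q ≠ 1) (t : ℝ) :
    q⁻¹ * (t - ω) - ω / (1 - q) = q⁻¹ * (t - ω / (1 - q)) := by
  have h1q : 1 - q ≠ 0 := sub_ne_zero.2 hq1.symm
  field_simp
  ring

theorem sub_inv_ne_zero (hq0 : 0 < q) (hq1 : q ≠ 1) : q - q⁻¹ ≠ 0 := by
  intro h
  have hqq : q * q = 1 := by
    rw [sub_eq_zero] at h
    nth_rewrite 2 [h]
    exact mul_inv_cancel₀ hq0.ne'
  rcases mul_self_eq_one_iff.1 hqq with h1 | h1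
  · exact hq1 h1
  · linarith

theorem inv_sub_ne_zero (hq0 : 0 < q) (hq1 : q ≠ 1) : q⁻¹ - q ≠ 0 := by
  rw [← neg_sub, neg_ne_zero]
  exact sub_inv_ne_zero hq0 hq1

theorem hsD_of_ne (hq0 : 0 < q) (hq1 : q ≠ 1) (y : ℝ → ℝ) {t : ℝ} (ht : t ≠ ω / (1 - q)) :
    hsD q ω y t = (y (q * t + ω) - y (q⁻¹ * (t - ω))) / ((q - q⁻¹) * (t - ω / (1 - q))) := by
  rw [hsD, if_neg ht]
  congr 1
  linear_combination sigma_sub_fixedPoint ω hq1 t - sigmaInv_sub_fixedPoint ω hq0.ne' hq1 t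

theorem hsD_affine (hq0 : 0 < q) (hq1 : q ≠ 1) (c d t : ℝ) :
    hsD q ω (fun s => c * s + d) t = c := by
  by_cases ht : t = ω / (1 - q)
  · simp [hsD, ht]
  · have hD : (q - q⁻¹) * (t - ω / (1 - q)) ≠ 0 :=
      mul_ne_zero (sub_inv_ne_zero hq0 hq1) (sub_ne_zero.2 ht)
    rw [hsD_of_ne hq0 hq1 _ ht, div_eq_iff hD]
    linear_combination c * (sigma_sub_fixedPoint ω hq1 t - sigmaInv_sub_fixedPoint ω hq0.ne' hq1 t)

theorem hsD_affine_add (hq0 : 0 < q) (hq1 : q ≠ 1) (c d : ℝ) (u : ℝ → ℝ) {t : ℝ}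
    (ht : t ≠ ω / (1 - q)) : hsD q ω (fun s => c * s + d + u s) t = c + hsD q ω u t := by
  have hD : (q - q⁻¹) * (t - ω / (1 - q)) ≠ 0 :=
    mul_ne_zero (sub_inv_ne_zero hq0 hq1) (sub_ne_zero.2 ht)
  rw [hsD_of_ne hq0 hq1 _ ht, hsD_of_ne hq0 hq1 _ ht, div_eq_iff hD, add_mul, div_mul_cancel₀ _ hD]
  linear_combination c * (sigma_sub_fixedPoint ω hq1 t - sigmaInv_sub_fixedPoint ω hq0.ne' hq1 t)

theorem hsD_mul_affine (hq0 : 0 < q) (hq1 : q ≠ 1) (k : ℝ) (u : ℝ → ℝ) {t : ℝ}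
    (ht : t ≠ ω / (1 - q)) :
    hsD q ω (fun s => (k + q * (s - ω / (1 - q))) * u s) t
      = (k + t - ω / (1 - q)) * hsD q ω u t + q * u (q * t + ω) := by
  have hD : (q - q⁻¹) * (t - ω / (1 - q)) ≠ 0 :=
    mul_ne_zero (sub_inv_ne_zero hq0 hq1) (sub_ne_zero.2 ht)
  rw [hsD_of_ne hq0 hq1 _ ht, hsD_of_ne hq0 hq1 _ ht, sigma_sub_fixedPoint ω hq1,
    sigmaInv_sub_fixedPoint ω hq0.ne' hq1, mul_div_assoc', div_add' _ _ _ hD, div_left_inj' hD]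
  linear_combination (t - ω / (1 - q)) * (u (q * t + ω) - u (q⁻¹ * (t - ω))) *
    mul_inv_cancel₀ hq0.ne'

theorem hsSeries_hsD (hq0 : 0 < q) (hq1 : q < 1) (F : ℝ → ℝ) {x : ℝ} (hx : x ≠ ω / (1 - q))
    (n : ℕ) :
    hsSeries q ω (hsD q ω F) x n =
      (F (q ^ (2 * n) * (x - ω / (1 - q)) + ω / (1 - q))
        - F (q ^ (2 * (n + 1)) * (x - ω / (1 - q)) + ω / (1 - q)))
        / ((q⁻¹ - q) * (x - ω / (1 - q))) := by
  obtain ⟨e, he⟩ : ∃ e, e = ω / (1 - q) := ⟨_, rfl⟩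
  have h1q : 1 - q ≠ 0 := sub_ne_zero.2 hq1.ne'
  have hX : x - e ≠ 0 := sub_ne_zero.2 (he ▸ hx)
  have hσ : q * (q ^ (2 * n + 1) * (x - e) + e) + ω = q ^ (2 * (n + 1)) * (x - e) + e := by
    rw [he]; field_simp; ring
  have hσinv : q⁻¹ * (q ^ (2 * n + 1) * (x - e) + e - ω) = q ^ (2 * n) * (x - e) + e := by
    rw [he]; field_simp; ring
  rw [hsSeries, hsD_of_ne hq0 hq1.ne F (hsIter_ne hq0.ne' hq1.ne hx _), hsIter_eq hq1.ne, ← he, hσ,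
    hσinv, add_sub_cancel_right, mul_div_assoc',
    div_eq_div_iff (mul_ne_zero (sub_inv_ne_zero hq0 hq1.ne) (mul_ne_zero (pow_ne_zero _ hq0.ne') hX))
      (mul_ne_zero (inv_sub_ne_zero hq0 hq1.ne) hX)]
  ring

theorem hsInt_hsD (hq0 : 0 < q) (hq1 : q < 1) {F : ℝ → ℝ} {x : ℝ} (hx : x ≠ ω / (1 - q))
    (hF : ContinuousAt F (ω / (1 - q))) (hs : Summable (hsSeries q ω (hsD q ω F) x)) :
    hsInt q ω (hsD q ω F) x = F x - F (ω / (1 - q)) := by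
  have hD : (q⁻¹ - q) * (x - ω / (1 - q)) ≠ 0 :=
    mul_ne_zero (inv_sub_ne_zero hq0 hq1.ne) (sub_ne_zero.2 hx)
  have hpts : Tendsto (fun n : ℕ => q ^ (2 * n) * (x - ω / (1 - q)) + ω / (1 - q)) atTop
      (𝓝 (ω / (1 - q))) := by
    simpa [pow_mul] using ((tendsto_pow_atTop_nhds_zero_of_lt_one (sq_nonneg q)
      (by nlinarith)).mul_const (x - ω / (1 - q))).add_const (ω / (1 - q))
  have hsum : HasSum (hsSeries q ω (hsD q ω F) x)
      ((F x - F (ω / (1 - q))) / ((q⁻¹ - q) * (x - ω / (1 - q)))) := by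
    rw [hs.hasSum_iff_tendsto_nat]
    refine ((tendsto_const_nhds.sub (hF.tendsto.comp hpts)).div_const _).congr fun N => ?_
    simp only [hsSeries_hsD hq0 hq1 F hx, ← Finset.sum_div, Finset.sum_range_sub'
      (fun n => F (q ^ (2 * n) * (x - ω / (1 - q)) + ω / (1 - q))),
      mul_zero, pow_zero, one_mul, sub_add_cancel, Function.comp_apply]
  rw [hsInt_eq hq0.ne' hq1.ne, hsum.tsum_eq, mul_div_cancel₀ _ hD]

theorem hsLag_affine_add (hq0 : 0 < q) (hq1 : q ≠ 1) (c d : ℝ) (u : ℝ → ℝ) {t : ℝ}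
    (ht : t ≠ ω / (1 - q)) :
    hsLag q ω (fun s => c * s + d + u s) t = hsLag q ω (fun s => c * s + d) t
      + (hsD q ω u t ^ 2
        + hsD q ω (fun s => (2 * c + ω / (1 - q) + q * (s - ω / (1 - q))) * u s) t) := by
  simp only [hsLag, hsD_affine_add hq0 hq1 c d u ht, hsD_affine hq0 hq1,
    hsD_mul_affine hq0 hq1 _ u ht]
  ring

theorem exists_bound_hsIter (hq0 : 0 ≤ q) (hq1 : q < 1) {u : ℝ → ℝ}
    (hu : ContinuousAt u (ω / (1 - q))) (x : ℝ) :
    ∃ C, ∀ k, |u ((fun s => q * s + ω)^[k] x)| ≤ C := by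
  obtain ⟨C, hC⟩ := isBounded_iff_forall_norm_le.1
    (Metric.isBounded_range_of_tendsto _ (hu.tendsto.comp (tendsto_hsIter hq0 hq1 x)))
  exact ⟨C, fun k => hC _ ⟨k, rfl⟩⟩

theorem summable_hsSeries_hsLag_affine (hq0 : 0 < q) (hq1 : q < 1) {x : ℝ}
    (hx : ω / (1 - q) ≤ x) (c d : ℝ) :
    Summable (hsSeries q ω (hsLag q ω fun s => c * s + d) x) := by
  have hL : (hsLag q ω fun s => c * s + d) = fun t => c ^ 2 + q * (c * (q * t + ω) + d) + t * c :=
    funext fun t => by rw [hsLag, hsD_affine hq0 hq1.ne]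
  exact summable_hsSeries_of_continuousOn hq0.le hq1 hx (by rw [hL]; fun_prop)

theorem summable_hsSeries_hsD_mul_affine (hq0 : 0 < q) (hq1 : q < 1) {x C C' : ℝ}
    (hx : ω / (1 - q) < x) (k : ℝ) {u : ℝ → ℝ}
    (hDu : ∀ n, |hsD q ω u ((fun s => q * s + ω)^[2 * n + 1] x)| ≤ C)
    (hu : ∀ n, |u ((fun s => q * s + ω)^[n] x)| ≤ C') :
    Summable (hsSeries q ω (hsD q ω fun s => (k + q * (s - ω / (1 - q))) * u s) x) := by
  refine summable_hsSeries hq0.le hq1 (C := (|k| + |ω / (1 - q)| + |x|) * C + q * C') fun n => ?_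
  obtain ⟨ht₀, htx⟩ := hsIter_mem_Icc hq0.le hq1 hx.le (2 * n + 1)
  have hcoef : |k + (fun s => q * s + ω)^[2 * n + 1] x - ω / (1 - q)|
      ≤ |k| + |ω / (1 - q)| + |x| :=
    abs_le.2 ⟨by linarith [neg_abs_le k, abs_nonneg (ω / (1 - q)), abs_nonneg x],
      by linarith [le_abs_self k, le_abs_self x, neg_abs_le (ω / (1 - q))]⟩
  have hσ : |u (q * (fun s => q * s + ω)^[2 * n + 1] x + ω)| ≤ C' := by
    simpa only [Function.iterate_succ_apply'] using hu (2 * n + 1 + 1)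
  rw [hsD_mul_affine hq0 hq1.ne k u (hsIter_ne hq0.ne' hq1.ne hx.ne' _)]
  refine (abs_add_le _ _).trans ?_
  rw [abs_mul, abs_mul, abs_of_pos hq0]
  exact add_le_add (mul_le_mul hcoef (hDu n) (abs_nonneg _) (by positivity))
    (mul_le_mul_of_nonneg_left hσ hq0.le)

theorem hsInt_hsLag_affine_le (hq0 : 0 < q) (hq1 : q < 1) {b : ℝ} (hb : ω / (1 - q) < b)
    (c d : ℝ) {u : ℝ → ℝ} (hu0 : u (ω / (1 - q)) = 0) (hub : u b = 0)
    (hu : ContinuousAt u (ω / (1 - q)))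
    (hDu : ∃ C, ∀ n, |hsD q ω u ((fun s => q * s + ω)^[2 * n + 1] b)| ≤ C) :
    hsInt q ω (hsLag q ω fun s => c * s + d) b
      ≤ hsInt q ω (hsLag q ω fun s => c * s + d + u s) b := by
  obtain ⟨C, hC⟩ := hDu
  -- `D̃F` is the part of the integrand that is linear in `u`
  set F : ℝ → ℝ := fun s => (2 * c + ω / (1 - q) + q * (s - ω / (1 - q))) * u s
  have hsum₁ := summable_hsSeries_hsLag_affine hq0 hq1 hb.le c d
  have hsum₂ : Summable (hsSeries q ω (fun t => hsD q ω u t ^ 2) b) :=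
    summable_hsSeries hq0.le hq1 fun n => by
      rw [abs_pow]; exact pow_le_pow_left₀ (abs_nonneg _) (hC n) 2
  have hsum₃ : Summable (hsSeries q ω (hsD q ω F) b) :=
    (exists_bound_hsIter hq0.le hq1 hu b).elim fun _ hC' =>
      summable_hsSeries_hsD_mul_affine hq0 hq1 hb _ hC hC'
  have hexact : hsInt q ω (hsD q ω F) b = 0 := by
    have hFc : ContinuousAt F (ω / (1 - q)) :=
      (by fun_prop : Continuous fun s => 2 * c + ω / (1 - q) + q * (s - ω / (1 - q))).continuousAt.mul
        hu
    rw [hsInt_hsD hq0 hq1 hb.ne' hFc hsum₃]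
    simp [F, hub, hu0]
  rw [hsInt_congr (g := (hsLag q ω fun s => c * s + d) + ((fun t => hsD q ω u t ^ 2) + hsD q ω F))
      fun n => hsLag_affine_add hq0 hq1.ne c d u (hsIter_ne hq0.ne' hq1.ne hb.ne' _),
    hsInt_add hsum₁ (hsSeries_add (ω := ω) _ _ b ▸ hsum₂.add hsum₃), hsInt_add hsum₂ hsum₃, hexact,
    add_zero]
  exact le_add_of_nonneg_right (hsInt_nonneg hq0 hq1 hb.le fun n => sq_nonneg _)

theorem hsAdmissible_affine (hq0 : 0 < q) (hq1 : q < 1) {a b A B c d : ℝ}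
    (ha : ω / (1 - q) ≤ a) (hab : a ≤ b) (hA : c * a + d = A) (hB : c * b + d = B) :
    hsAdmissible q ω a b A B (fun t => c * t + d) := by
  obtain ⟨C, hC⟩ := isCompact_Icc.exists_bound_of_continuousOn
    (by fun_prop : ContinuousOn (fun t => c * t + d) (Icc (ω / (1 - q)) b))
  have hD : hsD q ω (fun t => c * t + d) = fun _ => c := funext (hsD_affine hq0 hq1.ne c d)
  refine ⟨hA, hB, ⟨max C |c|, fun t ht => ⟨?_, ?_⟩⟩, by fun_prop,
    by rw [hD]; exact continuousAt_const⟩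
  · exact (hC t (hsPts_subset_Icc hq0.le hq1 ha hab ht)).trans (le_max_left _ _)
  · rw [hD]
    exact le_max_right _ _

theorem hsFunc_affine_le (hq0 : 0 < q) (hq1 : q < 1) {b A B c d : ℝ} {y : ℝ → ℝ}
    (hb : ω / (1 - q) < b) (hA : c * (ω / (1 - q)) + d = A) (hB : c * b + d = B)
    (hy : hsAdmissible q ω (ω / (1 - q)) b A B y) :
    hsFunc q ω (ω / (1 - q)) b (fun t => c * t + d) ≤ hsFunc q ω (ω / (1 - q)) b y := by
  obtain ⟨u, rfl⟩ : ∃ u : ℝ → ℝ, y = fun s => c * s + d + u s :=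
    ⟨fun s => y s - (c * s + d), funext fun s => by ring⟩
  obtain ⟨hyA, hyB, ⟨M, hM⟩, hy_cont, -⟩ := hy
  have hDu : ∀ n, |hsD q ω u ((fun s => q * s + ω)^[2 * n + 1] b)| ≤ M + |c| := by
    intro n
    have h := (hM _ (hsIter_mem_hsPts _ b n)).2
    rw [hsD_affine_add hq0 hq1.ne c d u (hsIter_ne hq0.ne' hq1.ne hb.ne' _)] at h
    calc |hsD q ω u _| = |(c + hsD q ω u _) - c| := by rw [add_sub_cancel_left]
      _ ≤ M + |c| := (abs_sub _ _).trans (by linarith)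
  have hu : ContinuousAt u (ω / (1 - q)) := by
    convert hy_cont.sub (by fun_prop : ContinuousAt (fun s => c * s + d) (ω / (1 - q))) using 1
    funext s
    simp
  simp only [hsFunc, hsInt_fixedPoint hq0.ne' hq1.ne, sub_zero]
  exact hsInt_hsLag_affine_le hq0 hq1 hb c d (by linarith) (by linarith) hu ⟨M + |c|, hDu⟩

end HahnSymmetric

theorem stmt19_general (q ω : ℝ) (hq : q ∈ Set.Ioo (0:ℝ) 1)
    (a b A B : ℝ) (ha : a = ω / (1 - q)) (hab : a < b) :
    hsAdmissible q ω a b A B (fun t => ((A - B) / (a - b)) * t + (a * B - b * A) / (a - b)) ∧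
    ∀ y : ℝ → ℝ, hsAdmissible q ω a b A B y →
      hsFunc q ω a b (fun t => ((A - B) / (a - b)) * t + (a * B - b * A) / (a - b))
        ≤ hsFunc q ω a b y := by
  obtain ⟨hq0, hq1⟩ := hq
  have hab' : a - b ≠ 0 := sub_ne_zero.2 hab.ne
  have hA : (A - B) / (a - b) * a + (a * B - b * A) / (a - b) = A := by field_simp; ring
  have hB : (A - B) / (a - b) * b + (a * B - b * A) / (a - b) = B := by field_simp; ring
  subst ha
  exact ⟨hsAdmissible_affine hq0 hq1 le_rfl hab.le hA hB,
    fun y hy => hsFunc_affine_le hq0 hq1 hab hA hB hy⟩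

/-- The affine function `y(t) = ((A−B)/(a−b))t + (aB−bA)/(a−b)` is an admissible global
minimizer of the Hahn symmetric variational functional
`L[y] = ∫_a^b ((D̃_{q,ω}[y])² + q·y∘σ + t·D̃_{q,ω}[y]) d̃_{q,ω}t` subject to
`y(a) = A`, `y(b) = B`, where `a = ω₀ < b`. -/
theorem stmt19 (q ω : ℝ) (hq : q ∈ Set.Ioo (0:ℝ) 1) (hω : 0 ≤ ω)
    (a b A B : ℝ) (ha : a = ω / (1 - q)) (hab : a < b) (hAB : A ≠ B) :
    hsAdmissible q ω a b A B (fun t => ((A - B) / (a - b)) * t + (a * B - b * A) / (a - b)) ∧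
    ∀ y : ℝ → ℝ, hsAdmissible q ω a b A B y →
      hsFunc q ω a b (fun t => ((A - B) / (a - b)) * t + (a * B - b * A) / (a - b))
        ≤ hsFunc q ω a b y :=
  stmt19_general q ω hq a b A B ha hab
end
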